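/- arXiv:1703.01266 — 6 statements merged into one kernel-verified Lean document; each statement's English description precedes it below -/
import Mathlib

section
/- For every density matrix ρ on ℂ^d with d ≥ 2, the asymmetry weight dominates the rescaled robustness of asymmetry: A_w(ρ) ≥ A_R(ρ)/(d−1). (Here one uses that A_R(τ) ≤ d−1 for every density matrix τ on ℂ^d.) -/
/-!
Write `ρ = (1 - s) σ + s τ` with `σ` symmetric. Since `τ ≤ 1` in the Loewner order,
`τ' = (1 - τ) / (d - 1)` is again a state, and `ρ + s (d - 1) τ' = (1 - s) σ + s 1` is a multiple
of a symmetric state. Hence `A_R(ρ) ≤ s (d - 1)` for every admissible weight `s`.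
-/

open Matrix BigOperators
open scoped ComplexOrder

noncomputable section

/-- A density matrix: positive semidefinite with unit trace. -/
def IsDensity {n : Type*} [Fintype n] (ρ : Matrix n n ℂ) : Prop :=
  ρ.PosSemidef ∧ ρ.trace = 1

/-- A state is symmetric w.r.t. the representation `U` if it is invariant
under conjugation by every `U g`. -/
def IsSymmetricState {d : ℕ} {G : Type*} [Group G]
    (U : G → Matrix (Fin d) (Fin d) ℂ) (σ : Matrix (Fin d) (Fin d) ℂ) : Prop :=
  ∀ g : G, U g * σ * (U g)ᴴ = σ

/-- The asymmetry weight of a state `ρ`. -/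
noncomputable def asymWeight {d : ℕ} {G : Type*} [Group G]
    (U : G → Matrix (Fin d) (Fin d) ℂ) (ρ : Matrix (Fin d) (Fin d) ℂ) : ℝ :=
  sInf {s : ℝ | s ∈ Set.Icc (0 : ℝ) 1 ∧
    ∃ σ τ : Matrix (Fin d) (Fin d) ℂ,
      IsDensity σ ∧ IsSymmetricState U σ ∧ IsDensity τ ∧
      ρ = (1 - s) • σ + s • τ}

/-- The robustness of asymmetry. -/
noncomputable def asymRobustness {d : ℕ} {G : Type*} [Group G]
    (U : G → Matrix (Fin d) (Fin d) ℂ) (ρ : Matrix (Fin d) (Fin d) ℂ) : ℝ :=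
  sInf {s : ℝ | 0 ≤ s ∧ ∃ τ : Matrix (Fin d) (Fin d) ℂ, IsDensity τ ∧
    IsSymmetricState U ((1 + s)⁻¹ • (ρ + s • τ))}

section Density

variable {n : Type*} [Fintype n] [DecidableEq n]

lemma Matrix.PosSemidef.eigenvalues_le_re_trace {A : Matrix n n ℂ} (hA : A.PosSemidef) (i : n) :
    hA.isHermitian.eigenvalues i ≤ A.trace.re := by
  rw [hA.isHermitian.trace_eq_sum_eigenvalues, Complex.re_sum]
  exact Finset.single_le_sum (fun j _ ↦ hA.eigenvalues_nonneg j) (Finset.mem_univ i)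

open scoped MatrixOrder in
lemma IsDensity.posSemidef_one_sub {τ : Matrix n n ℂ} (hτ : IsDensity τ) :
    (1 - τ).PosSemidef := by
  have hle : τ ≤ algebraMap ℝ (Matrix n n ℂ) 1 :=
    le_algebraMap_of_spectrum_le (by
      rw [hτ.1.isHermitian.spectrum_real_eq_range_eigenvalues]
      rintro _ ⟨i, rfl⟩
      simpa [hτ.2] using hτ.1.eigenvalues_le_re_trace i) hτ.1.isHermitian
  simpa using Matrix.le_iff.mp hle

lemma isDensity_inv_card_smul_one [Nonempty n] :
    IsDensity ((Fintype.card n : ℝ)⁻¹ • (1 : Matrix n n ℂ)) := by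
  refine ⟨PosSemidef.one.smul (by positivity), ?_⟩
  rw [trace_smul, trace_one]
  simp [Complex.real_smul]

lemma IsDensity.isDensity_smul_one_sub (hn : 1 < Fintype.card n) {τ : Matrix n n ℂ}
    (hτ : IsDensity τ) : IsDensity (((Fintype.card n : ℝ) - 1)⁻¹ • (1 - τ)) := by
  have hn' : (1 : ℝ) < Fintype.card n := by exact_mod_cast hn
  refine ⟨hτ.posSemidef_one_sub.smul (inv_nonneg.mpr (by linarith)), ?_⟩
  rw [trace_smul, trace_sub, trace_one, hτ.2, Complex.real_smul]
  push_cast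
  exact inv_mul_cancel₀ (by exact_mod_cast (sub_pos.mpr hn').ne')

end Density

section Symmetry

variable {d : ℕ} {G : Type*} [Group G] {U : G → Matrix (Fin d) (Fin d) ℂ}

lemma isSymmetricState_one (hU : ∀ g, U g ∈ unitaryGroup (Fin d) ℂ) :
    IsSymmetricState U 1 := fun g ↦ by
  rw [mul_one, ← star_eq_conjTranspose, ← mem_unitaryGroup_iff.mp (hU g)]

lemma IsSymmetricState.add {σ σ' : Matrix (Fin d) (Fin d) ℂ} (hσ : IsSymmetricState U σ)
    (hσ' : IsSymmetricState U σ') : IsSymmetricState U (σ + σ') := fun g ↦ by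
  rw [mul_add, add_mul, hσ g, hσ' g]

lemma IsSymmetricState.smul {σ : Matrix (Fin d) (Fin d) ℂ} (hσ : IsSymmetricState U σ) (r : ℝ) :
    IsSymmetricState U (r • σ) := fun g ↦ by
  rw [Matrix.mul_smul, Matrix.smul_mul, hσ g]

lemma asymRobustness_le {ρ τ : Matrix (Fin d) (Fin d) ℂ} {s : ℝ} (hs : 0 ≤ s) (hτ : IsDensity τ)
    (hsym : IsSymmetricState U ((1 + s)⁻¹ • (ρ + s • τ))) : asymRobustness U ρ ≤ s :=
  csInf_le ⟨0, fun _ hx ↦ hx.1⟩ ⟨hs, τ, hτ, hsym⟩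

lemma asymRobustness_le_mul_of_eq_add (hU : ∀ g, U g ∈ unitaryGroup (Fin d) ℂ) (hd : 2 ≤ d)
    {ρ σ τ : Matrix (Fin d) (Fin d) ℂ} {s : ℝ} (hs : 0 ≤ s) (hσ : IsSymmetricState U σ)
    (hτ : IsDensity τ) (hρ : ρ = (1 - s) • σ + s • τ) :
    asymRobustness U ρ ≤ s * ((d : ℝ) - 1) := by
  have hd1 : (0 : ℝ) < d - 1 := by
    have : (2 : ℝ) ≤ d := by exact_mod_cast hd
    linarith
  have hτc := hτ.isDensity_smul_one_sub (by rw [Fintype.card_fin]; omega)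
  rw [Fintype.card_fin] at hτc
  refine asymRobustness_le (by positivity) hτc ?_
  have hmix : ρ + (s * ((d : ℝ) - 1)) • (((d : ℝ) - 1)⁻¹ • (1 - τ)) = (1 - s) • σ + s • 1 := by
    rw [smul_smul, mul_assoc, mul_inv_cancel₀ hd1.ne', mul_one, hρ, smul_sub]
    abel
  rw [hmix]
  exact ((hσ.smul _).add ((isSymmetricState_one hU).smul _)).smul _

lemma le_asymWeight (hU : ∀ g, U g ∈ unitaryGroup (Fin d) ℂ) (hd : 0 < d)
    {ρ : Matrix (Fin d) (Fin d) ℂ} (hρ : IsDensity ρ) {c : ℝ}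
    (h : ∀ s ∈ Set.Icc (0 : ℝ) 1, ∀ σ τ, IsDensity σ → IsSymmetricState U σ → IsDensity τ →
      ρ = (1 - s) • σ + s • τ → c ≤ s) :
    c ≤ asymWeight U ρ := by
  have : Nonempty (Fin d) := ⟨⟨0, hd⟩⟩
  refine le_csInf ⟨1, ⟨by norm_num, le_rfl⟩, _, ρ, isDensity_inv_card_smul_one,
    (isSymmetricState_one hU).smul _, hρ, by simp⟩ ?_
  rintro s ⟨hs, σ, τ, hσ, hσsym, hτ, hρs⟩
  exact h s hs σ τ hσ hσsym hτ hρs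

end Symmetry

theorem asymWeight_ge_robustness_div_general
    {d : ℕ} (hd : 2 ≤ d) {G : Type*} [Group G]
    (U : G → Matrix (Fin d) (Fin d) ℂ)
    (hU : ∀ g, U g ∈ Matrix.unitaryGroup (Fin d) ℂ)
    (ρ : Matrix (Fin d) (Fin d) ℂ) (hρ : IsDensity ρ) :
    asymWeight U ρ ≥ asymRobustness U ρ / ((d : ℝ) - 1) := by
  have hd1 : (0 : ℝ) < d - 1 := by
    have : (2 : ℝ) ≤ d := by exact_mod_cast hd
    linarith
  refine le_asymWeight hU (by omega) hρ fun s hs σ τ _ hσ hτ hρs ↦ ?_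
  rw [div_le_iff₀ hd1]
  exact asymRobustness_le_mul_of_eq_add hU hd hs.1 hσ hτ hρs

theorem asymWeight_ge_robustness_div
    {d : ℕ} (hd : 2 ≤ d) {G : Type*} [Group G] [Fintype G]
    (U : G → Matrix (Fin d) (Fin d) ℂ)
    (hU : ∀ g, U g ∈ Matrix.unitaryGroup (Fin d) ℂ)
    (hUhom : ∀ g₁ g₂, U (g₁ * g₂) = U g₁ * U g₂)
    (ρ : Matrix (Fin d) (Fin d) ℂ) (hρ : IsDensity ρ) :
    asymWeight U ρ ≥ asymRobustness U ρ / ((d : ℝ) - 1) :=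
  asymWeight_ge_robustness_div_general hd U hU ρ hρ
end
end

section
/- The coherence weight is convex: for all density matrices ρ₁, ρ₂ on ℂ^d and every p ∈ [0,1], C_w(pρ₁ + (1−p)ρ₂) ≤ p·C_w(ρ₁) + (1−p)·C_w(ρ₂). -/
/-!
The set of admissible weights `{s | ρ = (1 - s) σ + s τ}` is jointly convex in `(ρ, s)`:
mixing decompositions of `ρ₁` and `ρ₂` with weights `p` and `1 - p` gives a decomposition of
`p ρ₁ + (1 - p) ρ₂` with weight `p s₁ + (1 - p) s₂`, because incoherent states and states each
form a convex set, so the two incoherent parts (and the two remaining parts) recombine into a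
single state of the right kind. Taking infima over both decompositions gives the convexity.
-/

open Matrix BigOperators
open scoped ComplexOrder

noncomputable section

/-- A matrix is incoherent if it is diagonal in the fixed (standard) basis. -/
def IsIncoherent {n : Type*} (σ : Matrix n n ℂ) : Prop :=
  ∀ i j, i ≠ j → σ i j = 0

/-- The coherence weight of a state `ρ`. -/
noncomputable def cohWeight {n : Type*} [Fintype n] (ρ : Matrix n n ℂ) : ℝ :=
  sInf {s : ℝ | s ∈ Set.Icc (0 : ℝ) 1 ∧
    ∃ σ τ : Matrix n n ℂ,
      IsDensity σ ∧ IsIncoherent σ ∧ IsDensity τ ∧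
      ρ = (1 - s) • σ + s • τ}

open scoped Pointwise in
theorem Real.sInf_le_mul_sInf_add_mul_sInf {S T U : Set ℝ} (hS : S.Nonempty) (hS' : BddBelow S)
    (hT : T.Nonempty) (hT' : BddBelow T) (hU : BddBelow U) {a b : ℝ} (ha : 0 ≤ a) (hb : 0 ≤ b)
    (h : ∀ s ∈ S, ∀ t ∈ T, a * s + b * t ∈ U) : sInf U ≤ a * sInf S + b * sInf T := by
  have hsub : a • S + b • T ⊆ U := by
    rintro _ ⟨_, ⟨s, hs, rfl⟩, _, ⟨t, ht, rfl⟩, rfl⟩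
    exact h s hs t ht
  calc sInf U ≤ sInf (a • S + b • T) :=
        csInf_le_csInf hU (hS.smul_set.add hT.smul_set) hsub
    _ = a * sInf S + b * sInf T := by
        rw [csInf_add hS.smul_set (hS'.smul_of_nonneg ha) hT.smul_set (hT'.smul_of_nonneg hb),
          Real.sInf_smul_of_nonneg ha, Real.sInf_smul_of_nonneg hb, smul_eq_mul, smul_eq_mul]

theorem convex_setOf_isIncoherent {n : Type*} : Convex ℝ {σ : Matrix n n ℂ | IsIncoherent σ} := by
  rintro σ hσ τ hτ a b - - - i j hij
  simp [hσ i j hij, hτ i j hij]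

section Coherence

variable {n : Type*} [Fintype n]

theorem convex_setOf_isDensity : Convex ℝ {ρ : Matrix n n ℂ | IsDensity ρ} := by
  rintro ρ ⟨hρ, hρtr⟩ τ ⟨hτ, hτtr⟩ a b ha hb hab
  refine ⟨(hρ.smul ha).add (hτ.smul hb), ?_⟩
  rw [trace_add, trace_smul, trace_smul, hρtr, hτtr, ← add_smul, hab, one_smul]

theorem IsDensity.diagonal_diag [DecidableEq n] {ρ : Matrix n n ℂ} (hρ : IsDensity ρ) :
    IsDensity (diagonal ρ.diag) ∧ IsIncoherent (diagonal ρ.diag) :=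
  ⟨⟨posSemidef_diagonal_iff.2 fun _ => hρ.1.diag_nonneg, by rw [trace_diagonal]; exact hρ.2⟩,
    fun _ _ hij => diagonal_apply_ne _ hij⟩

def coherenceWeights (ρ : Matrix n n ℂ) : Set ℝ :=
  {s : ℝ | s ∈ Set.Icc (0 : ℝ) 1 ∧
    ∃ σ τ : Matrix n n ℂ, IsDensity σ ∧ IsIncoherent σ ∧ IsDensity τ ∧
      ρ = (1 - s) • σ + s • τ}

theorem cohWeight_eq_sInf_coherenceWeights (ρ : Matrix n n ℂ) :
    cohWeight ρ = sInf (coherenceWeights ρ) := rfl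

theorem bddBelow_coherenceWeights (ρ : Matrix n n ℂ) : BddBelow (coherenceWeights ρ) :=
  ⟨0, fun _ hs => hs.1.1⟩

theorem IsDensity.one_mem_coherenceWeights {ρ : Matrix n n ℂ} (hρ : IsDensity ρ) :
    (1 : ℝ) ∈ coherenceWeights ρ := by
  classical
  obtain ⟨hσ, hσ'⟩ := hρ.diagonal_diag
  exact ⟨⟨zero_le_one, le_rfl⟩, _, ρ, hσ, hσ', hρ, by simp⟩

theorem add_mem_coherenceWeights {ρ₁ ρ₂ : Matrix n n ℂ} {s₁ s₂ a b : ℝ}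
    (h₁ : s₁ ∈ coherenceWeights ρ₁) (h₂ : s₂ ∈ coherenceWeights ρ₂)
    (ha : 0 ≤ a) (hb : 0 ≤ b) (hab : a + b = 1) :
    a * s₁ + b * s₂ ∈ coherenceWeights (a • ρ₁ + b • ρ₂) := by
  obtain ⟨⟨hs₁0, hs₁1⟩, σ₁, τ₁, hσ₁, hσ₁', hτ₁, rfl⟩ := h₁
  obtain ⟨⟨hs₂0, hs₂1⟩, σ₂, τ₂, hσ₂, hσ₂', hτ₂, rfl⟩ := h₂
  obtain ⟨σ, ⟨hσ, hσ'⟩, hσ_eq⟩ :=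
    (convex_setOf_isDensity.inter convex_setOf_isIncoherent).exists_mem_add_smul_eq
      ⟨hσ₁, hσ₁'⟩ ⟨hσ₂, hσ₂'⟩ (mul_nonneg ha (sub_nonneg.2 hs₁1))
      (mul_nonneg hb (sub_nonneg.2 hs₂1))
  obtain ⟨τ, hτ, hτ_eq⟩ := convex_setOf_isDensity.exists_mem_add_smul_eq hτ₁ hτ₂
    (mul_nonneg ha hs₁0) (mul_nonneg hb hs₂0)
  have hweight : 1 - (a * s₁ + b * s₂) = a * (1 - s₁) + b * (1 - s₂) := by
    linear_combination -hab
  refine ⟨⟨by positivity, ?_⟩, σ, τ, hσ, hσ', hτ, ?_⟩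
  · nlinarith
  · rw [hweight, hσ_eq, hτ_eq]
    module

end Coherence

theorem cohWeight_convex {d : ℕ}
    (ρ₁ ρ₂ : Matrix (Fin d) (Fin d) ℂ) (hρ₁ : IsDensity ρ₁) (hρ₂ : IsDensity ρ₂)
    (p : ℝ) (hp : p ∈ Set.Icc (0 : ℝ) 1) :
    cohWeight (p • ρ₁ + (1 - p) • ρ₂) ≤ p * cohWeight ρ₁ + (1 - p) * cohWeight ρ₂ := by
  obtain ⟨hp0, hp1⟩ := hp
  simp only [cohWeight_eq_sInf_coherenceWeights]
  exact Real.sInf_le_mul_sInf_add_mul_sInf ⟨1, hρ₁.one_mem_coherenceWeights⟩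
    (bddBelow_coherenceWeights ρ₁) ⟨1, hρ₂.one_mem_coherenceWeights⟩
    (bddBelow_coherenceWeights ρ₂) (bddBelow_coherenceWeights _) hp0 (sub_nonneg.2 hp1)
    fun _ h₁ _ h₂ => add_mem_coherenceWeights h₁ h₂ hp0 (sub_nonneg.2 hp1) (add_sub_cancel p 1)
end
end

section
/- For every density matrix ρ on ℂ^d, C_w(ρ) ≥ ‖ρ − Δ(ρ)‖₂² / ‖ρ‖_∞ ≥ ‖ρ − Δ(ρ)‖₂², where ‖A‖₂² = Tr(A†A) is the squared Hilbert–Schmidt norm and ‖ρ‖_∞ is the largest eigenvalue of ρ. -/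
open Matrix BigOperators
open scoped ComplexOrder

noncomputable section

/-- The dephasing (complete decoherence) map: keep only the diagonal. -/
def dephase {n : Type*} [DecidableEq n] (X : Matrix n n ℂ) : Matrix n n ℂ :=
  Matrix.diagonal (fun i => X i i)

/-- The largest eigenvalue of a matrix (for a density matrix this is `‖ρ‖_∞`). -/
noncomputable def maxEigenvalue {n : Type*} [Fintype n] (A : Matrix n n ℂ) : ℝ :=
  sSup {r : ℝ | ∃ v : n → ℂ, v ≠ 0 ∧ A.mulVec v = (r : ℂ) • v}

/-!
If `ρ = (1 - s) σ + s τ` with `σ` diagonal, the off-diagonal part `A = ρ - Δ ρ` equals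
`s (τ - Δ τ)`. As `A` is Hermitian with zero diagonal,
`‖A‖₂² = Tr (A A) = s Tr (A τ) = s (Tr (ρ τ) - Tr (Δ ρ τ)) ≤ s Tr (ρ τ) ≤ s λ_max(ρ)`,
the last step because `λ_max(ρ) • 1 - ρ` is positive semidefinite and `Tr τ = 1`.
The second inequality is `0 < λ_max(ρ) ≤ Tr ρ = 1`.
-/

section Dephase

variable {n : Type*} [DecidableEq n]

lemma dephase_add (X Y : Matrix n n ℂ) : dephase (X + Y) = dephase X + dephase Y :=
  (diagonal_add _ _).symm

lemma dephase_sub (X Y : Matrix n n ℂ) : dephase (X - Y) = dephase X - dephase Y :=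
  (diagonal_sub _ _).symm

lemma dephase_smul (s : ℝ) (X : Matrix n n ℂ) : dephase (s • X) = s • dephase X := by
  ext i j
  rcases eq_or_ne i j with rfl | hij
  · simp [dephase]
  · simp [dephase, diagonal_apply_ne _ hij]

lemma dephase_conjTranspose (X : Matrix n n ℂ) : (dephase X)ᴴ = dephase Xᴴ := by
  simp [dephase, diagonal_conjTranspose]

lemma isIncoherent_dephase (X : Matrix n n ℂ) : IsIncoherent (dephase X) :=
  fun _ _ hij ↦ diagonal_apply_ne _ hij

lemma IsIncoherent.dephase_eq {σ : Matrix n n ℂ} (hσ : IsIncoherent σ) : dephase σ = σ := by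
  ext i j
  rcases eq_or_ne i j with rfl | hij
  · simp [dephase]
  · simp [dephase, diagonal_apply_ne _ hij, hσ i j hij]

lemma dephase_sub_dephase_self (X : Matrix n n ℂ) : dephase (X - dephase X) = 0 := by
  rw [dephase_sub, (isIncoherent_dephase X).dephase_eq, sub_self]

lemma sub_dephase_eq_smul_of_eq_add {ρ σ τ : Matrix n n ℂ} {s : ℝ} (hσ : IsIncoherent σ)
    (h : ρ = (1 - s) • σ + s • τ) : ρ - dephase ρ = s • (τ - dephase τ) := by
  rw [h, dephase_add, dephase_smul, dephase_smul, hσ.dephase_eq]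
  module

lemma Matrix.PosSemidef.dephase {X : Matrix n n ℂ} (hX : X.PosSemidef) :
    (_root_.dephase X).PosSemidef :=
  PosSemidef.diagonal fun _ ↦ hX.diag_nonneg

variable [Fintype n]

lemma trace_dephase (X : Matrix n n ℂ) : (dephase X).trace = X.trace :=
  trace_diagonal _

lemma trace_mul_dephase (X Y : Matrix n n ℂ) :
    (X * dephase Y).trace = (dephase X * Y).trace := by
  simp [dephase, trace, mul_diagonal, diagonal_mul]

lemma IsDensity.dephase {ρ : Matrix n n ℂ} (hρ : IsDensity ρ) : IsDensity (dephase ρ) :=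
  ⟨hρ.1.dephase, (trace_dephase ρ).trans hρ.2⟩

end Dephase

section MaxEigenvalue

variable {n : Type*} [Fintype n] [DecidableEq n]

lemma spectrum_real_eq_setOf_mulVec_eq_smul (A : Matrix n n ℂ) :
    spectrum ℝ A = {r : ℝ | ∃ v : n → ℂ, v ≠ 0 ∧ A *ᵥ v = (r : ℂ) • v} := by
  ext r
  rw [Set.mem_ofPred_eq, ← spectrum.algebraMap_mem_iff ℂ, ← spectrum_toLin',
    ← Module.End.hasEigenvalue_iff_mem_spectrum]
  constructor
  · intro h
    obtain ⟨v, hv⟩ := h.exists_hasEigenvector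
    exact ⟨v, hv.2, Module.End.mem_eigenspace_iff.mp hv.1⟩
  · rintro ⟨v, hv0, hv⟩
    exact Module.End.hasEigenvalue_of_hasEigenvector ⟨Module.End.mem_eigenspace_iff.mpr hv, hv0⟩

lemma maxEigenvalue_eq_sSup_spectrum (A : Matrix n n ℂ) :
    maxEigenvalue A = sSup (spectrum ℝ A) := by
  rw [spectrum_real_eq_setOf_mulVec_eq_smul]
  rfl

lemma le_maxEigenvalue_of_mem_spectrum {A : Matrix n n ℂ} {r : ℝ} (hr : r ∈ spectrum ℝ A) :
    r ≤ maxEigenvalue A := by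
  rw [maxEigenvalue_eq_sSup_spectrum]
  exact le_csSup A.finite_real_spectrum.bddAbove hr

lemma Matrix.IsHermitian.maxEigenvalue_mem_range_eigenvalues [Nonempty n] {A : Matrix n n ℂ}
    (hA : A.IsHermitian) : maxEigenvalue A ∈ Set.range hA.eigenvalues := by
  rw [maxEigenvalue_eq_sSup_spectrum, hA.spectrum_real_eq_range_eigenvalues]
  exact (Set.range_nonempty _).csSup_mem (Set.finite_range _)

open scoped MatrixOrder in
lemma Matrix.IsHermitian.posSemidef_maxEigenvalue_smul_one_sub {A : Matrix n n ℂ}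
    (hA : A.IsHermitian) : ((maxEigenvalue A : ℂ) • 1 - A).PosSemidef := by
  have : A ≤ algebraMap ℝ (Matrix n n ℂ) (maxEigenvalue A) :=
    le_algebraMap_of_spectrum_le fun _ ↦ le_maxEigenvalue_of_mem_spectrum
  rwa [le_iff, Algebra.algebraMap_eq_smul_one, ← Complex.coe_smul] at this

end MaxEigenvalue

section Density

variable {n : Type*} [Fintype n]

lemma IsDensity.nonempty {ρ : Matrix n n ℂ} (hρ : IsDensity ρ) : Nonempty n := by
  by_contra h
  rw [not_nonempty_iff] at h
  simpa [trace] using hρ.2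

variable [DecidableEq n]

open scoped MatrixOrder Matrix.Norms.L2Operator in
lemma Matrix.PosSemidef.re_trace_mul_nonneg {P Q : Matrix n n ℂ} (hP : P.PosSemidef)
    (hQ : Q.PosSemidef) : 0 ≤ (P * Q).trace.re := by
  obtain ⟨B, rfl⟩ := CStarAlgebra.nonneg_iff_eq_star_mul_self.mp hP.nonneg
  rw [Matrix.mul_assoc, trace_mul_comm]
  exact (RCLike.nonneg_iff.mp (hQ.mul_mul_conjTranspose_same B).trace_nonneg).1

lemma Matrix.IsHermitian.re_trace_mul_le_maxEigenvalue {A τ : Matrix n n ℂ} (hA : A.IsHermitian)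
    (hτ : IsDensity τ) : (A * τ).trace.re ≤ maxEigenvalue A := by
  have := hA.posSemidef_maxEigenvalue_smul_one_sub.re_trace_mul_nonneg hτ.1
  rw [sub_mul, smul_mul, one_mul, trace_sub, trace_smul, hτ.2] at this
  simpa using this

lemma IsDensity.sum_eigenvalues {ρ : Matrix n n ℂ} (hρ : IsDensity ρ) :
    ∑ i, hρ.1.isHermitian.eigenvalues i = 1 := by
  have h : ((∑ i, hρ.1.isHermitian.eigenvalues i : ℝ) : ℂ) = 1 := by
    simpa using hρ.1.isHermitian.trace_eq_sum_eigenvalues.symm.trans hρ.2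
  exact_mod_cast h

lemma IsDensity.maxEigenvalue_le_one {ρ : Matrix n n ℂ} (hρ : IsDensity ρ) :
    maxEigenvalue ρ ≤ 1 := by
  have := hρ.nonempty
  obtain ⟨i, hi⟩ := hρ.1.isHermitian.maxEigenvalue_mem_range_eigenvalues
  rw [← hi, ← hρ.sum_eigenvalues]
  exact Finset.single_le_sum (fun j _ ↦ hρ.1.eigenvalues_nonneg j) (Finset.mem_univ i)

lemma IsDensity.maxEigenvalue_pos {ρ : Matrix n n ℂ} (hρ : IsDensity ρ) :
    0 < maxEigenvalue ρ := by
  by_contra! h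
  have : ∑ i, hρ.1.isHermitian.eigenvalues i ≤ 0 := Finset.sum_nonpos fun i _ ↦
    (le_maxEigenvalue_of_mem_spectrum (hρ.1.isHermitian.eigenvalues_mem_spectrum_real i)).trans h
  linarith [hρ.sum_eigenvalues]

lemma re_trace_conjTranspose_mul_sub_dephase_le {ρ σ τ : Matrix n n ℂ} {s : ℝ}
    (hρ : ρ.PosSemidef) (hσ : IsIncoherent σ) (hτ : IsDensity τ) (hs : 0 ≤ s)
    (h : ρ = (1 - s) • σ + s • τ) :
    ((ρ - dephase ρ)ᴴ * (ρ - dephase ρ)).trace.re ≤ s * maxEigenvalue ρ := by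
  have hAH : (ρ - dephase ρ)ᴴ = ρ - dephase ρ := by
    rw [conjTranspose_sub, dephase_conjTranspose, hρ.isHermitian.eq]
  have hAτ :
      ((ρ - dephase ρ) * (ρ - dephase ρ)).trace = s * ((ρ - dephase ρ) * τ).trace := by
    nth_rewrite 2 [sub_dephase_eq_smul_of_eq_add hσ h]
    rw [Matrix.mul_smul, Matrix.mul_sub, trace_smul, trace_sub, trace_mul_dephase,
      dephase_sub_dephase_self, zero_mul, trace_zero, sub_zero, Complex.real_smul]
  have hle : ((ρ - dephase ρ) * τ).trace.re ≤ maxEigenvalue ρ := by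
    rw [sub_mul, trace_sub, Complex.sub_re]
    linarith [hρ.isHermitian.re_trace_mul_le_maxEigenvalue hτ,
      hρ.dephase.re_trace_mul_nonneg hτ.1]
  rw [hAH, hAτ, Complex.re_ofReal_mul]
  exact mul_le_mul_of_nonneg_left hle hs

end Density

theorem cohWeight_ge_HS_distance {d : ℕ}
    (ρ : Matrix (Fin d) (Fin d) ℂ) (hρ : IsDensity ρ) :
    cohWeight ρ ≥
      (((ρ - dephase ρ)ᴴ * (ρ - dephase ρ)).trace).re / maxEigenvalue ρ ∧
    (((ρ - dephase ρ)ᴴ * (ρ - dephase ρ)).trace).re / maxEigenvalue ρ ≥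
      (((ρ - dephase ρ)ᴴ * (ρ - dephase ρ)).trace).re := by
  have hmax := hρ.maxEigenvalue_pos
  have hHS : 0 ≤ (((ρ - dephase ρ)ᴴ * (ρ - dephase ρ)).trace).re :=
    (Complex.nonneg_iff.mp (posSemidef_conjTranspose_mul_self _).trace_nonneg).1
  constructor
  · have hone : ρ = (1 - 1 : ℝ) • dephase ρ + (1 : ℝ) • ρ := by
      rw [sub_self, zero_smul, zero_add, one_smul]
    refine le_csInf
      ⟨1, ⟨zero_le_one, le_rfl⟩, _, _, hρ.dephase, isIncoherent_dephase ρ, hρ, hone⟩ ?_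
    rintro s ⟨⟨hs, -⟩, σ, τ, -, hσ, hτ, h⟩
    rw [div_le_iff₀ hmax]
    exact re_trace_conjTranspose_mul_sub_dephase_le hρ.1 hσ hτ hs h
  · rw [ge_iff_le, le_div_iff₀ hmax]
    exact mul_le_of_le_one_right hHS hρ.maxEigenvalue_le_one
end
end

section
/- Let λ ∈ (0,1] and θ ∈ (0, π/2). The two-qubit Gisin state ρ_{λ,θ} = λ|ψ(θ)⟩⟨ψ(θ)| + (1−λ)(|00⟩⟨00| + |11⟩⟨11|)/2, where |ψ(θ)⟩ = sinθ|01⟩ − cosθ|10⟩, satisfies C_w(ρ_{λ,θ}) = λ and C_{l₁}(ρ_{λ,θ}) = C_R(ρ_{λ,θ}) = λ·sin(2θ), where coherence is measured in the product standard basis {|00⟩, |01⟩, |10⟩, |11⟩}. -/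
open Matrix BigOperators
open scoped ComplexOrder

noncomputable section

/-- The robustness of coherence. -/
noncomputable def cohRobustness {n : Type*} [Fintype n] (ρ : Matrix n n ℂ) : ℝ :=
  sInf {s : ℝ | 0 ≤ s ∧ ∃ τ : Matrix n n ℂ, IsDensity τ ∧
    IsIncoherent ((1 + s)⁻¹ • (ρ + s • τ))}

/-- The `l₁` norm of coherence: sum of absolute values of off-diagonal entries. -/
noncomputable def Cl1 {n : Type*} [Fintype n] [DecidableEq n] (ρ : Matrix n n ℂ) : ℝ :=
  ∑ i : n, ∑ j : n, if i = j then 0 else ‖ρ i j‖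

/-- The vector `|ψ(θ)⟩ = sin θ |01⟩ - cos θ |10⟩` of a two-qubit system. -/
noncomputable def gisinVec (θ : ℝ) : Fin 2 × Fin 2 → ℂ := fun p =>
  if p = ((0 : Fin 2), (1 : Fin 2)) then (Real.sin θ : ℂ)
  else if p = ((1 : Fin 2), (0 : Fin 2)) then -(Real.cos θ : ℂ)
  else 0

/-- The Gisin state `ρ_{λ,θ} = λ |ψ(θ)⟩⟨ψ(θ)| + (1-λ)(|00⟩⟨00| + |11⟩⟨11|)/2`. -/
noncomputable def gisinState (lam θ : ℝ) :
    Matrix (Fin 2 × Fin 2) (Fin 2 × Fin 2) ℂ :=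
  lam • Matrix.vecMulVec (gisinVec θ) (star (gisinVec θ)) +
    (1 - lam) • Matrix.diagonal (fun p : Fin 2 × Fin 2 =>
      if p = ((0 : Fin 2), (0 : Fin 2)) then (1 / 2 : ℂ)
      else if p = ((1 : Fin 2), (1 : Fin 2)) then (1 / 2 : ℂ) else 0)

/-!
All the coherence of `ρ = gisinState λ θ` sits in the entries `ρ₀₁,₁₀ = ρ₁₀,₀₁ = -λ sin θ cos θ`,
and the block of `ρ` on `span {|01⟩, |10⟩}` is the rank-one `λ |ψ⟩⟨ψ|`. If `ρ = (1 - s) σ + s τ`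
with `σ` diagonal, then `s τ` carries that off-diagonal entry while lying below `ρ` on the diagonal;
the bound `|τᵢⱼ|² ≤ τᵢᵢ τⱼⱼ` then forces `s τ` to agree with `ρ` on the whole block, so
`s ≥ s tr τ ≥ λ (sin² θ + cos² θ) = λ`. If instead `ρ + s τ` is diagonal, then
`s |τ₀₁,₁₀| = λ sin θ cos θ`, while `|τᵢⱼ| ≤ 1/2` for every state; adding the Bell state `Ψ⁺` with
weight `λ sin 2θ` attains this bound.
-/

namespace Matrix.PosSemidef

variable {n : Type*} {M : Matrix n n ℂ}

lemma im_apply_self (hM : M.PosSemidef) (i : n) : (M i i).im = 0 :=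
  (Complex.nonneg_iff.mp hM.diag_nonneg).2.symm

lemma re_apply_self_nonneg (hM : M.PosSemidef) (i : n) : 0 ≤ (M i i).re :=
  (Complex.nonneg_iff.mp hM.diag_nonneg).1

lemma norm_apply_sq_le (hM : M.PosSemidef) (i j : n) :
    ‖M i j‖ ^ 2 ≤ (M i i).re * (M j j).re := by
  have hdet := (hM.submatrix ![i, j]).det_nonneg
  rw [det_fin_two] at hdet
  simp only [submatrix_apply, Matrix.cons_val_zero, Matrix.cons_val_one] at hdet
  have hji : M j i = star (M i j) := (hM.1.apply j i).symm
  rw [hji, Complex.star_def, Complex.mul_conj, Complex.normSq_eq_norm_sq] at hdet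
  have hdet_re := (Complex.nonneg_iff.mp hdet).1
  simp only [Complex.sub_re, Complex.mul_re, hM.im_apply_self, mul_zero, sub_zero,
    Complex.ofReal_re] at hdet_re
  linarith

end Matrix.PosSemidef

namespace IsDensity

variable {n : Type*} [Fintype n] {τ : Matrix n n ℂ}

lemma sum_re_apply_self (h : IsDensity τ) : ∑ i, (τ i i).re = 1 := by
  simpa [Matrix.trace] using congrArg Complex.re h.2

lemma re_add_re_le_one (h : IsDensity τ) {i j : n} (hij : i ≠ j) :
    (τ i i).re + (τ j j).re ≤ 1 := by
  classical
  rw [← h.sum_re_apply_self, ← Finset.sum_pair (f := fun k => (τ k k).re) hij]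
  exact Finset.sum_le_sum_of_subset_of_nonneg (Finset.subset_univ _)
    fun k _ _ => h.1.re_apply_self_nonneg k

lemma norm_apply_le_half (h : IsDensity τ) {i j : n} (hij : i ≠ j) : ‖τ i j‖ ≤ 1 / 2 := by
  have hcs := h.1.norm_apply_sq_le i j
  have htr := h.re_add_re_le_one hij
  have hi := h.1.re_apply_self_nonneg i
  have hj := h.1.re_apply_self_nonneg j
  nlinarith [norm_nonneg (τ i j), sq_nonneg ((τ i i).re - (τ j j).re)]

end IsDensity

lemma isDensity_vecMulVec_self_star {n : Type*} [Fintype n] {v : n → ℂ}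
    (hv : v ⬝ᵥ star v = 1) : IsDensity (vecMulVec v (star v)) :=
  ⟨posSemidef_vecMulVec_self_star v, by rw [trace_vecMulVec, hv]⟩

lemma isDensity_diagonal {n : Type*} [Fintype n] [DecidableEq n] {d : n → ℂ}
    (h0 : ∀ i, 0 ≤ d i) (h1 : ∑ i, d i = 1) : IsDensity (diagonal d) :=
  ⟨PosSemidef.diagonal h0, by rw [trace_diagonal, h1]⟩

lemma isIncoherent_diagonal {n : Type*} [DecidableEq n] (d : n → ℂ) :
    IsIncoherent (diagonal d) :=
  fun _ _ hij => diagonal_apply_ne d hij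

section Coherence

variable {n : Type*} [Fintype n] {ρ τ : Matrix n n ℂ} {s : ℝ} {i j : n}

/-- A pure coherent `2 × 2` block of `ρ` must be carried entirely by the coherent part `s τ`. -/
lemma re_add_re_le_of_eq_smul_add_smul {σ : Matrix n n ℂ} (hs : s ∈ Set.Icc (0 : ℝ) 1)
    (hσ : σ.PosSemidef) (hσinc : IsIncoherent σ) (hτ : IsDensity τ)
    (hρ : ρ = (1 - s) • σ + s • τ) (hij : i ≠ j) (hi : 0 < (ρ i i).re) (hj : 0 < (ρ j j).re)
    (hpure : ‖ρ i j‖ ^ 2 = (ρ i i).re * (ρ j j).re) :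
    (ρ i i).re + (ρ j j).re ≤ s := by
  obtain ⟨hs0, hs1⟩ := hs
  have hdiag : ∀ k, (ρ k k).re = (1 - s) * (σ k k).re + s * (τ k k).re := fun k => by
    simp [hρ]
  have hoff : ‖ρ i j‖ = s * ‖τ i j‖ := by
    simp [hρ, hσinc i j hij, abs_of_nonneg hs0]
  have hle : ∀ k, s * (τ k k).re ≤ (ρ k k).re := fun k => by
    nlinarith [hdiag k, mul_nonneg (sub_nonneg.2 hs1) (hσ.re_apply_self_nonneg k)]
  have hprod : (ρ i i).re * (ρ j j).re ≤ (s * (τ i i).re) * (s * (τ j j).re) := by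
    rw [← hpure, hoff]
    nlinarith [hτ.1.norm_apply_sq_le i j, sq_nonneg s]
  have hτi := mul_nonneg hs0 (hτ.1.re_apply_self_nonneg i)
  have hτj := mul_nonneg hs0 (hτ.1.re_apply_self_nonneg j)
  have hρi : (ρ i i).re ≤ s * (τ i i).re := by nlinarith [hle i, hle j]
  have hρj : (ρ j j).re ≤ s * (τ j j).re := by nlinarith [hle i, hle j]
  nlinarith [hτ.re_add_re_le_one hij]

lemma two_mul_norm_apply_le_of_isIncoherent (hs : 0 ≤ s) (hτ : IsDensity τ)
    (hinc : IsIncoherent ((1 + s)⁻¹ • (ρ + s • τ))) (hij : i ≠ j) :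
    2 * ‖ρ i j‖ ≤ s := by
  have hzero : ρ i j + s • τ i j = 0 := by
    have h := hinc i j hij
    simp only [Matrix.smul_apply, Matrix.add_apply] at h
    exact (smul_eq_zero.mp h).resolve_left (by positivity)
  have hoff : ‖ρ i j‖ = s * ‖τ i j‖ := by
    rw [eq_neg_of_add_eq_zero_left hzero, norm_neg, norm_smul, Real.norm_of_nonneg hs]
  nlinarith [hτ.norm_apply_le_half hij]

end Coherence

lemma Complex.inv_sqrt_two_mul_self : ((Real.sqrt 2 : ℂ))⁻¹ * (Real.sqrt 2 : ℂ)⁻¹ = 1 / 2 := by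
  rw [← mul_inv, ← Complex.ofReal_mul, Real.mul_self_sqrt zero_le_two]
  norm_num

def psiPlus : Fin 2 × Fin 2 → ℂ := fun p =>
  if p = (0, 1) ∨ p = (1, 0) then (Real.sqrt 2 : ℂ)⁻¹ else 0

lemma psiPlus_dotProduct_star : psiPlus ⬝ᵥ star psiPlus = 1 := by
  simp [dotProduct, Fintype.sum_prod_type, psiPlus, Prod.ext_iff]
  rw [Complex.inv_sqrt_two_mul_self]
  norm_num

section Gisin

variable (lam θ : ℝ)

lemma star_gisinVec : star (gisinVec θ) = gisinVec θ := by
  ext p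
  simp only [Pi.star_apply, gisinVec]
  split_ifs <;> simp [-Complex.ofReal_sin, -Complex.ofReal_cos]

lemma gisinVec_dotProduct_star : gisinVec θ ⬝ᵥ star (gisinVec θ) = 1 := by
  rw [star_gisinVec]
  simp [dotProduct, Fintype.sum_prod_type, gisinVec, ← sq, -Complex.ofReal_sin,
    -Complex.ofReal_cos]
  exact_mod_cast Real.sin_sq_add_cos_sq θ

lemma gisinState_apply_01_01 :
    gisinState lam θ (0, 1) (0, 1) = (lam * Real.sin θ ^ 2 : ℝ) := by
  simp [gisinState, star_gisinVec, vecMulVec_apply, gisinVec, Prod.ext_iff, sq]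

lemma gisinState_apply_10_10 :
    gisinState lam θ (1, 0) (1, 0) = (lam * Real.cos θ ^ 2 : ℝ) := by
  simp [gisinState, star_gisinVec, vecMulVec_apply, gisinVec, Prod.ext_iff, sq]

lemma gisinState_apply_01_10 :
    gisinState lam θ (0, 1) (1, 0) = (-(lam * Real.sin θ * Real.cos θ) : ℝ) := by
  simp [gisinState, star_gisinVec, vecMulVec_apply, gisinVec, Prod.ext_iff]
  ring

lemma isIncoherent_gisinState_add_smul_psiPlus :
    IsIncoherent
      (gisinState lam θ + (lam * Real.sin (2 * θ)) • vecMulVec psiPlus (star psiPlus)) := by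
  intro p q hpq
  fin_cases p <;> fin_cases q <;> simp [gisinState, gisinVec, star_gisinVec, vecMulVec_apply,
    psiPlus, Prod.ext_iff, -Complex.ofReal_sin, -Complex.ofReal_cos] at hpq ⊢
  all_goals
    rw [Complex.inv_sqrt_two_mul_self, Real.sin_two_mul]
    push_cast
    ring

variable {lam θ}

lemma cohWeight_gisinState (hlam : lam ∈ Set.Ioc (0 : ℝ) 1) (hsin : 0 < Real.sin θ)
    (hcos : 0 < Real.cos θ) : cohWeight (gisinState lam θ) = lam := by
  refine IsLeast.csInf_eq ⟨⟨⟨hlam.1.le, hlam.2⟩, _, _,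
    isDensity_diagonal (fun p => ?_) ?_, isIncoherent_diagonal _,
    isDensity_vecMulVec_self_star (gisinVec_dotProduct_star θ), add_comm _ _⟩, ?_⟩
  · split_ifs <;> positivity
  · simp [Fintype.sum_prod_type]
    norm_num
  rintro s ⟨hs, σ, τ, hσ, hσinc, hτ, hρ⟩
  have h := re_add_re_le_of_eq_smul_add_smul (i := (0, 1)) (j := (1, 0)) hs hσ.1 hσinc hτ hρ
    (by decide) ?_ ?_ ?_
  all_goals simp only [gisinState_apply_01_01, gisinState_apply_10_10, gisinState_apply_01_10,
    Complex.ofReal_re, Complex.norm_real, Real.norm_eq_abs, sq_abs] at *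
  · rwa [← mul_add, Real.sin_sq_add_cos_sq, mul_one] at h
  · exact mul_pos hlam.1 (pow_pos hsin 2)
  · exact mul_pos hlam.1 (pow_pos hcos 2)
  · ring

lemma Cl1_gisinState (hlam : 0 ≤ lam) (hsin : 0 ≤ Real.sin θ) (hcos : 0 ≤ Real.cos θ) :
    Cl1 (gisinState lam θ) = lam * Real.sin (2 * θ) := by
  simp [Cl1, Fintype.sum_prod_type, gisinState, gisinVec, star_gisinVec, vecMulVec_apply,
    Prod.ext_iff, -Complex.ofReal_sin, -Complex.ofReal_cos]
  rw [abs_of_nonneg hlam, abs_of_nonneg hsin, abs_of_nonneg hcos, Real.sin_two_mul]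
  ring

lemma cohRobustness_gisinState (hlam : 0 ≤ lam) (hsin : 0 ≤ Real.sin θ)
    (hcos : 0 ≤ Real.cos θ) : cohRobustness (gisinState lam θ) = lam * Real.sin (2 * θ) := by
  have hsc : 0 ≤ lam * Real.sin θ * Real.cos θ := by positivity
  rw [Real.sin_two_mul]
  refine IsLeast.csInf_eq ⟨⟨by positivity, _,
    isDensity_vecMulVec_self_star psiPlus_dotProduct_star, fun p q hpq => ?_⟩, ?_⟩
  · rw [Matrix.smul_apply, ← Real.sin_two_mul,
      isIncoherent_gisinState_add_smul_psiPlus lam θ p q hpq, smul_zero]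
  rintro s ⟨hs, τ, hτ, hinc⟩
  have h := two_mul_norm_apply_le_of_isIncoherent (i := (0, 1)) (j := (1, 0)) hs hτ hinc
    (by decide)
  rw [gisinState_apply_01_10, Complex.norm_real, Real.norm_eq_abs, abs_neg,
    abs_of_nonneg hsc] at h
  linarith

end Gisin

theorem gisin_cohWeight_and_l1_and_robustness
    (lam θ : ℝ) (hlam : lam ∈ Set.Ioc (0 : ℝ) 1) (hθ : θ ∈ Set.Ioo 0 (Real.pi / 2)) :
    cohWeight (gisinState lam θ) = lam ∧
    Cl1 (gisinState lam θ) = lam * Real.sin (2 * θ) ∧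
    cohRobustness (gisinState lam θ) = lam * Real.sin (2 * θ) := by
  have hsin : 0 < Real.sin θ :=
    Real.sin_pos_of_pos_of_lt_pi hθ.1 (by linarith [hθ.2, Real.pi_pos])
  have hcos : 0 < Real.cos θ := Real.cos_pos_of_mem_Ioo ⟨by linarith [hθ.1, Real.pi_pos], hθ.2⟩
  exact ⟨cohWeight_gisinState hlam hsin hcos, Cl1_gisinState hlam.1.le hsin.le hcos.le,
    cohRobustness_gisinState hlam.1.le hsin.le hcos.le⟩
end
end

section
/- For all density matrices ρ₁ on ℂ^{d₁} and ρ₂ on ℂ^{d₂}, the coherence weight of their Kronecker (tensor) product satisfies C_w(ρ₁ ⊗ ρ₂) ≤ C_w(ρ₁) + C_w(ρ₂) − C_w(ρ₁)·C_w(ρ₂), where coherence on the tensor product is measured with respect to the product standard basis. -/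
open Matrix BigOperators
open scoped ComplexOrder

noncomputable section

open Kronecker

/-!
If `ρᵢ = (1 - sᵢ) σᵢ + sᵢ τᵢ` with `σᵢ` incoherent, then expanding the product gives
`ρ₁ ⊗ ρ₂ = (1 - s₁)(1 - s₂) σ₁ ⊗ σ₂ + R` with `σ₁ ⊗ σ₂` incoherent and `R ≥ 0` of trace
`1 - (1 - s₁)(1 - s₂) = s₁ + s₂ - s₁ s₂`, so this number is an admissible weight for `ρ₁ ⊗ ρ₂`.
Taking the infimum over `s₁` and then over `s₂` (the bound is affine and nondecreasing in each)
gives the theorem.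
-/

lemma le_add_mul_csInf {S : Set ℝ} (hne : S.Nonempty) (hbdd : BddBelow S) {a b t : ℝ}
    (hb : 0 ≤ b) (h : ∀ s ∈ S, t ≤ a + b * s) : t ≤ a + b * sInf S := by
  have hmono : Monotone fun s => a + b * s := fun _ _ hst => by
    dsimp only
    gcongr
  rw [hmono.map_csInf_of_continuousAt (by fun_prop) hne hbdd]
  exact le_csInf (hne.image _) (by simpa using h)

theorem IsDensity.kronecker {m n : Type*} [Fintype m] [Fintype n] {A : Matrix m m ℂ}
    {B : Matrix n n ℂ} (hA : IsDensity A) (hB : IsDensity B) : IsDensity (A ⊗ₖ B) := by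
  classical
  exact ⟨hA.1.kronecker hB.1, by rw [trace_kronecker, hA.2, hB.2, one_mul]⟩

theorem IsIncoherent.kronecker {m n : Type*} {A : Matrix m m ℂ} {B : Matrix n n ℂ}
    (hA : IsIncoherent A) (hB : IsIncoherent B) : IsIncoherent (A ⊗ₖ B) :=
  IsDiag.kronecker hA hB

section cohWeights

variable {n : Type*} [Fintype n]

/-- The set whose infimum is `cohWeight ρ`, by definition. -/
def cohWeights (ρ : Matrix n n ℂ) : Set ℝ :=
  {s : ℝ | s ∈ Set.Icc (0 : ℝ) 1 ∧
    ∃ σ τ : Matrix n n ℂ, IsDensity σ ∧ IsIncoherent σ ∧ IsDensity τ ∧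
      ρ = (1 - s) • σ + s • τ}

theorem bddBelow_cohWeights (ρ : Matrix n n ℂ) : BddBelow (cohWeights ρ) :=
  ⟨0, fun _ hs => hs.1.1⟩

theorem cohWeight_le_of_mem {ρ : Matrix n n ℂ} {s : ℝ} (hs : s ∈ cohWeights ρ) :
    cohWeight ρ ≤ s :=
  csInf_le (bddBelow_cohWeights ρ) hs

theorem one_mem_cohWeights {ρ : Matrix n n ℂ} (hρ : IsDensity ρ) : 1 ∈ cohWeights ρ := by
  classical
  refine ⟨⟨zero_le_one, le_rfl⟩, diagonal ρ.diag, ρ, ⟨?_, ?_⟩, isDiag_diagonal _, hρ, by simp⟩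
  · exact posSemidef_diagonal_iff.mpr fun _ => hρ.1.diag_nonneg
  · rw [trace_diagonal, ← hρ.2, trace]

theorem cohWeight_le_one {ρ : Matrix n n ℂ} (hρ : IsDensity ρ) : cohWeight ρ ≤ 1 :=
  cohWeight_le_of_mem (one_mem_cohWeights hρ)

theorem mem_cohWeights_of_eq_smul_add {ρ σ R : Matrix n n ℂ} {s : ℝ} (hσ : IsDensity σ)
    (hσi : IsIncoherent σ) (hR : R.PosSemidef) (hRs : R.trace = s) (hs : s ≤ 1)
    (hρ : ρ = (1 - s) • σ + R) : s ∈ cohWeights ρ := by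
  have hs0 : 0 ≤ s := by simpa [hRs] using hR.trace_nonneg
  refine ⟨⟨hs0, hs⟩, σ, ?_⟩
  rcases hs0.eq_or_lt with rfl | hs0
  · have hR0 : R = 0 := hR.trace_eq_zero_iff.mp (by simpa using hRs)
    exact ⟨σ, hσ, hσi, hσ, by simp [hρ, hR0]⟩
  refine ⟨s⁻¹ • R, hσ, hσi, ⟨hR.smul (inv_nonneg.mpr hs0.le), ?_⟩, ?_⟩
  · rw [trace_smul, hRs, Complex.real_smul]
    push_cast
    exact inv_mul_cancel₀ (by exact_mod_cast hs0.ne')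
  · rw [hρ, smul_inv_smul₀ hs0.ne']

end cohWeights

theorem kronecker_mem_cohWeights {m n : Type*} [Fintype m] [Fintype n] {ρ₁ : Matrix m m ℂ}
    {ρ₂ : Matrix n n ℂ} (hρ₁ : IsDensity ρ₁) {s₁ s₂ : ℝ} (h₁ : s₁ ∈ cohWeights ρ₁)
    (h₂ : s₂ ∈ cohWeights ρ₂) : s₁ + s₂ - s₁ * s₂ ∈ cohWeights (ρ₁ ⊗ₖ ρ₂) := by
  classical
  obtain ⟨⟨hs₁0, hs₁1⟩, σ₁, τ₁, hσ₁, hσ₁i, hτ₁, rfl⟩ := h₁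
  obtain ⟨⟨hs₂0, hs₂1⟩, σ₂, τ₂, hσ₂, hσ₂i, hτ₂, rfl⟩ := h₂
  -- `R = ρ₁ ⊗ s₂τ₂ + s₁τ₁ ⊗ (1 - s₂)σ₂` is what remains of `ρ₁ ⊗ ρ₂`
  -- after removing `(1 - s₁)(1 - s₂) σ₁ ⊗ σ₂`
  refine mem_cohWeights_of_eq_smul_add (hσ₁.kronecker hσ₂) (hσ₁i.kronecker hσ₂i)
    (R := ((1 - s₁) • σ₁ + s₁ • τ₁) ⊗ₖ (s₂ • τ₂) + (s₁ • τ₁) ⊗ₖ ((1 - s₂) • σ₂))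
    ((hρ₁.1.kronecker (hτ₂.1.smul hs₂0)).add
      ((hτ₁.1.smul hs₁0).kronecker (hσ₂.1.smul (sub_nonneg.mpr hs₂1)))) ?_ (by nlinarith) ?_
  · simp only [trace_add, trace_kronecker, trace_smul, hρ₁.2, hτ₁.2, hτ₂.2, hσ₂.2,
      Complex.real_smul]
    push_cast
    ring
  · simp only [add_kronecker, kronecker_add, smul_kronecker, kronecker_smul, smul_smul]
    module

theorem cohWeight_tensor_subadditive {d₁ d₂ : ℕ}
    (ρ₁ : Matrix (Fin d₁) (Fin d₁) ℂ) (hρ₁ : IsDensity ρ₁)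
    (ρ₂ : Matrix (Fin d₂) (Fin d₂) ℂ) (hρ₂ : IsDensity ρ₂) :
    cohWeight (ρ₁ ⊗ₖ ρ₂) ≤ cohWeight ρ₁ + cohWeight ρ₂ - cohWeight ρ₁ * cohWeight ρ₂ := by
  set t := cohWeight (ρ₁ ⊗ₖ ρ₂)
  have h₁ : ∀ s₂ ∈ cohWeights ρ₂, t ≤ s₂ + (1 - s₂) * cohWeight ρ₁ := fun s₂ hs₂ =>
    le_add_mul_csInf ⟨1, one_mem_cohWeights hρ₁⟩ (bddBelow_cohWeights ρ₁) (by linarith [hs₂.1.2])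
      fun s₁ hs₁ => (cohWeight_le_of_mem (kronecker_mem_cohWeights hρ₁ hs₁ hs₂)).trans_eq
        (by ring)
  have h₂ : t ≤ cohWeight ρ₁ + (1 - cohWeight ρ₁) * cohWeight ρ₂ :=
    le_add_mul_csInf ⟨1, one_mem_cohWeights hρ₂⟩ (bddBelow_cohWeights ρ₂)
      (by linarith [cohWeight_le_one hρ₁]) fun s₂ hs₂ => (h₁ s₂ hs₂).trans_eq (by ring)
  linarith
end
end

section
/- Let ρ = |ψ⟩⟨ψ| be a pure-state density matrix on ℂ^{d₁} ⊗ ℂ^{d₂} (indexed by pairs (i,j)), and let ρ₁ and ρ₂ be its reduced density matrices, (ρ₁)_{i,i'} = Σ_j ρ_{(i,j),(i',j)} and (ρ₂)_{j,j'} = Σ_i ρ_{(i,j),(i,j')}. Then C_R(ρ) ≥ C_R(ρ₁) + C_R(ρ₂), where coherence on the bipartite system is measured with respect to the product standard basis and on each subsystem with respect to its standard basis. -/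
open Matrix BigOperators
open scoped ComplexOrder

noncomputable section

open Finset

/-!
For any state, adding the diagonally dominant matrix that cancels its off-diagonal part yields a
diagonal matrix; normalised, that matrix is a state, so `C_R ≤ C_l₁`. For a pure state `ψ` the
phase vector `uᵢ = ψᵢ / |ψᵢ|` is a coherence witness: `u* σ u = tr σ` for diagonal `σ` and
`u* τ u ≥ 0` for states `τ`, so if `ρ + s τ` is diagonal then
`(∑ |ψᵢ|)² = 1 + C_l₁(ρ) ≤ 1 + s`, i.e. `C_l₁ ≤ C_R`. Finally the two reduced states only see
disjoint sets of off-diagonal entries of `ρ`, so `C_l₁(ρ₁) + C_l₁(ρ₂) ≤ C_l₁(ρ)`.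
-/

theorem Matrix.IsHermitian.posSemidef_of_sum_norm_le_re_diag {𝕜 n : Type*} [RCLike 𝕜]
    [Fintype n] [DecidableEq n] {A : Matrix n n 𝕜} (hA : A.IsHermitian)
    (hdom : ∀ i, ∑ j ∈ univ.erase i, ‖A i j‖ ≤ RCLike.re (A i i)) : A.PosSemidef := by
  refine hA.posSemidef_iff_eigenvalues_nonneg.mpr fun k => show 0 ≤ hA.eigenvalues k from ?_
  have hμ : Module.End.HasEigenvalue (toLin' A) (hA.eigenvalues k : 𝕜) := by
    refine Module.End.hasEigenvalue_of_hasEigenvector (x := (hA.eigenvectorBasis k).ofLp)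
      ⟨Module.End.mem_eigenspace_iff.mpr ?_, ?_⟩
    · rw [toLin'_apply, hA.mulVec_eigenvectorBasis, RCLike.real_smul_eq_coe_smul (K := 𝕜)]
    · exact (WithLp.ofLp_eq_zero 2).not.mpr (hA.eigenvectorBasis.orthonormal.ne_zero k)
  obtain ⟨i, hi⟩ := eigenvalue_mem_ball hμ
  rw [Metric.mem_closedBall, dist_comm, dist_eq_norm] at hi
  have hre := (RCLike.re_le_norm (A i i - hA.eigenvalues k)).trans (hi.trans (hdom i))
  simp only [map_sub, RCLike.ofReal_re] at hre
  linarith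

section Cl1

variable {n : Type*} [Fintype n] [DecidableEq n]

theorem Cl1_eq_sum_erase (ρ : Matrix n n ℂ) : Cl1 ρ = ∑ i, ∑ j ∈ univ.erase i, ‖ρ i j‖ := by
  refine sum_congr rfl fun i _ => ?_
  rw [← add_sum_erase _ _ (mem_univ i), if_pos rfl, zero_add]
  exact sum_congr rfl fun j hj => if_neg (ne_of_mem_erase hj).symm

theorem Cl1_nonneg (ρ : Matrix n n ℂ) : 0 ≤ Cl1 ρ := by
  rw [Cl1_eq_sum_erase]
  positivity

theorem isIncoherent_of_Cl1_eq_zero {ρ : Matrix n n ℂ} (h : Cl1 ρ = 0) : IsIncoherent ρ := by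
  intro i j hij
  rw [Cl1_eq_sum_erase, sum_eq_zero_iff_of_nonneg fun _ _ => by positivity] at h
  rw [← norm_eq_zero]
  exact (sum_eq_zero_iff_of_nonneg fun _ _ => norm_nonneg _).mp (h i (mem_univ i)) j
    (mem_erase.mpr ⟨hij.symm, mem_univ j⟩)

def offDiagCompensator (ρ : Matrix n n ℂ) : Matrix n n ℂ :=
  of fun i j => if i = j then ((∑ k ∈ univ.erase i, ‖ρ i k‖ : ℝ) : ℂ) else -ρ i j

theorem isIncoherent_add_offDiagCompensator (ρ : Matrix n n ℂ) :
    IsIncoherent (ρ + offDiagCompensator ρ) := by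
  intro i j hij
  simp [offDiagCompensator, hij]

theorem trace_offDiagCompensator (ρ : Matrix n n ℂ) :
    (offDiagCompensator ρ).trace = Cl1 ρ := by
  simp [trace, offDiagCompensator, Cl1_eq_sum_erase]

theorem posSemidef_offDiagCompensator {ρ : Matrix n n ℂ} (hρ : ρ.IsHermitian) :
    (offDiagCompensator ρ).PosSemidef := by
  refine IsHermitian.posSemidef_of_sum_norm_le_re_diag ?_ fun i => ?_
  · ext i j
    by_cases h : i = j
    · subst h
      simp [offDiagCompensator]
    · simp [offDiagCompensator, h, Ne.symm h, hρ.apply]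
  · refine le_of_eq ?_
    simp only [offDiagCompensator, of_apply, if_pos]
    exact sum_congr rfl fun j hj => by rw [if_neg (ne_of_mem_erase hj).symm, norm_neg]

end Cl1

theorem isIncoherent_smul_iff {n : Type*} {c : ℝ} (hc : c ≠ 0) {σ : Matrix n n ℂ} :
    IsIncoherent (c • σ) ↔ IsIncoherent σ := by
  simp only [IsIncoherent, Matrix.smul_apply, smul_eq_zero, hc, false_or]

section Robustness

variable {n : Type*} [Fintype n] {ρ τ : Matrix n n ℂ}

theorem cohRobustness_le {s : ℝ} (hs : 0 ≤ s) (hτ : IsDensity τ)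
    (h : IsIncoherent (ρ + s • τ)) : cohRobustness ρ ≤ s :=
  csInf_le ⟨0, fun _ hx => hx.1⟩ ⟨hs, τ, hτ, (isIncoherent_smul_iff (by positivity)).mpr h⟩

theorem exists_isIncoherent_add_Cl1_smul [DecidableEq n] (hρ : IsDensity ρ) :
    ∃ τ, IsDensity τ ∧ IsIncoherent (ρ + Cl1 ρ • τ) := by
  rcases (Cl1_nonneg ρ).eq_or_lt with h | h
  · exact ⟨ρ, hρ, by simpa [← h] using isIncoherent_of_Cl1_eq_zero h.symm⟩
  refine ⟨(Cl1 ρ)⁻¹ • offDiagCompensator ρ,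
    ⟨(posSemidef_offDiagCompensator hρ.1.1).smul (inv_nonneg.mpr h.le), ?_⟩, ?_⟩
  · rw [trace_smul, trace_offDiagCompensator, Complex.real_smul, Complex.ofReal_inv,
      inv_mul_cancel₀ (by exact_mod_cast h.ne')]
  · rw [smul_smul, mul_inv_cancel₀ h.ne', one_smul]
    exact isIncoherent_add_offDiagCompensator ρ

theorem cohRobustness_le_Cl1 [DecidableEq n] (hρ : IsDensity ρ) : cohRobustness ρ ≤ Cl1 ρ :=
  let ⟨_, hτ, h⟩ := exists_isIncoherent_add_Cl1_smul hρ
  cohRobustness_le (Cl1_nonneg ρ) hτ h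

theorem le_cohRobustness {c : ℝ} (hρ : IsDensity ρ)
    (h : ∀ s τ, 0 ≤ s → IsDensity τ → IsIncoherent (ρ + s • τ) → c ≤ s) :
    c ≤ cohRobustness ρ := by
  classical
  obtain ⟨τ₀, hτ₀, hinc₀⟩ := exists_isIncoherent_add_Cl1_smul hρ
  have hCl1 := Cl1_nonneg ρ
  refine le_csInf ⟨Cl1 ρ, hCl1, τ₀, hτ₀, (isIncoherent_smul_iff (by positivity)).mpr hinc₀⟩ ?_
  rintro s ⟨hs, τ, hτ, hinc⟩
  exact h s τ hs hτ ((isIncoherent_smul_iff (by positivity)).mp hinc)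

end Robustness

theorem star_mul_self_of_norm_eq_one {z : ℂ} (hz : ‖z‖ = 1) : star z * z = 1 := by
  rw [mul_comm, Complex.star_def, Complex.mul_conj', hz]
  norm_num

theorem IsIncoherent.dotProduct_mulVec {n : Type*} [Fintype n] {σ : Matrix n n ℂ}
    (hσ : IsIncoherent σ) {u : n → ℂ} (hu : ∀ i, ‖u i‖ = 1) :
    star u ⬝ᵥ σ *ᵥ u = σ.trace := by
  refine sum_congr rfl fun i _ => ?_
  rw [Pi.star_apply, mulVec, dotProduct,
    sum_eq_single i (fun j _ hji => by rw [hσ i j hji.symm, zero_mul]) (by simp),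
    mul_left_comm, star_mul_self_of_norm_eq_one (hu i), mul_one, diag_apply]

theorem re_dotProduct_mulVec_le_one_add_cohRobustness {n : Type*} [Fintype n]
    {ρ : Matrix n n ℂ} (hρ : IsDensity ρ) {u : n → ℂ} (hu : ∀ i, ‖u i‖ = 1) :
    (star u ⬝ᵥ ρ *ᵥ u).re ≤ 1 + cohRobustness ρ := by
  rw [← sub_le_iff_le_add']
  refine le_cohRobustness hρ fun s τ hs hτ hinc => ?_
  have hsum := congrArg Complex.re (hinc.dotProduct_mulVec hu)
  rw [trace_add, trace_smul, hρ.2, hτ.2, add_mulVec, dotProduct_add, smul_mulVec,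
    dotProduct_smul] at hsum
  simp only [Complex.add_re, Complex.real_smul, Complex.re_ofReal_mul, Complex.one_re,
    Complex.ofReal_re, mul_one] at hsum
  have hτu : 0 ≤ s * (star u ⬝ᵥ τ *ᵥ u).re := mul_nonneg hs (hτ.1.re_dotProduct_nonneg u)
  linarith

theorem isDensity_vecMulVec {n : Type*} [Fintype n] {ψ : n → ℂ} (hψ : ∑ i, ‖ψ i‖ ^ 2 = 1) :
    IsDensity (vecMulVec ψ (star ψ)) := by
  refine ⟨posSemidef_vecMulVec_self_star ψ, ?_⟩
  simp only [trace, diag_apply, vecMulVec_apply, Pi.star_apply, Complex.star_def,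
    Complex.mul_conj']
  exact_mod_cast hψ

theorem sq_sum_norm_eq_add_Cl1 {n : Type*} [Fintype n] [DecidableEq n] (ψ : n → ℂ) :
    (∑ i, ‖ψ i‖) ^ 2 = ∑ i, ‖ψ i‖ ^ 2 + Cl1 (vecMulVec ψ (star ψ)) := by
  rw [sq, sum_mul_sum, Cl1_eq_sum_erase, ← sum_add_distrib]
  refine sum_congr rfl fun i _ => ?_
  rw [← add_sum_erase _ _ (mem_univ i), sq]
  simp [vecMulVec_apply]

def phaseVector {n : Type*} (ψ : n → ℂ) : n → ℂ :=
  fun i => Complex.exp (Complex.arg (ψ i) * Complex.I)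

theorem norm_phaseVector {n : Type*} (ψ : n → ℂ) (i : n) : ‖phaseVector ψ i‖ = 1 :=
  Complex.norm_exp_ofReal_mul_I _

theorem star_phaseVector_mul {n : Type*} (ψ : n → ℂ) (i : n) :
    star (phaseVector ψ i) * ψ i = ‖ψ i‖ := by
  rw [← congrArg (star (phaseVector ψ i) * ·) (Complex.norm_mul_exp_arg_mul_I (ψ i)), mul_left_comm]
  change _ * (_ * phaseVector ψ i) = _
  rw [star_mul_self_of_norm_eq_one (norm_phaseVector ψ i), mul_one]

theorem dotProduct_mulVec_vecMulVec_phaseVector {n : Type*} [Fintype n] (ψ : n → ℂ) :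
    star (phaseVector ψ) ⬝ᵥ vecMulVec ψ (star ψ) *ᵥ phaseVector ψ = ((∑ i, ‖ψ i‖) ^ 2 : ℝ) := by
  have h : ∀ j, star (ψ j) * phaseVector ψ j = ‖ψ j‖ := fun j => by
    simpa [mul_comm] using congrArg star (star_phaseVector_mul ψ j)
  simp only [dotProduct, mulVec, vecMulVec_apply, Pi.star_apply, mul_sum]
  push_cast
  rw [sq, sum_mul_sum]
  refine sum_congr rfl fun i _ => sum_congr rfl fun j _ => ?_
  rw [← star_phaseVector_mul, ← h]
  ring

theorem Cl1_vecMulVec_le_cohRobustness {n : Type*} [Fintype n] [DecidableEq n] {ψ : n → ℂ}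
    (hψ : ∑ i, ‖ψ i‖ ^ 2 = 1) :
    Cl1 (vecMulVec ψ (star ψ)) ≤ cohRobustness (vecMulVec ψ (star ψ)) := by
  have hwitness :=
    re_dotProduct_mulVec_le_one_add_cohRobustness (isDensity_vecMulVec hψ) (norm_phaseVector ψ)
  rw [dotProduct_mulVec_vecMulVec_phaseVector, Complex.ofReal_re, sq_sum_norm_eq_add_Cl1,
    hψ] at hwitness
  linarith

section PartialTrace

variable {m n : Type*}

def partialTraceRight [Fintype n] (ρ : Matrix (m × n) (m × n) ℂ) : Matrix m m ℂ :=
  of fun i i' => ∑ j, ρ (i, j) (i', j)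

def partialTraceLeft [Fintype m] (ρ : Matrix (m × n) (m × n) ℂ) : Matrix n n ℂ :=
  of fun j j' => ∑ i, ρ (i, j) (i, j')

theorem partialTraceLeft_eq_partialTraceRight_submatrix [Fintype m]
    (ρ : Matrix (m × n) (m × n) ℂ) :
    partialTraceLeft ρ = partialTraceRight (ρ.submatrix Prod.swap Prod.swap) :=
  rfl

theorem trace_partialTraceRight [Fintype m] [Fintype n] (ρ : Matrix (m × n) (m × n) ℂ) :
    (partialTraceRight ρ).trace = ρ.trace := by
  simp [trace, partialTraceRight, Fintype.sum_prod_type]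

theorem partialTraceRight_vecMulVec [Fintype n] (ψ : m × n → ℂ) :
    partialTraceRight (vecMulVec ψ (star ψ)) =
      of (Function.curry ψ) * (of (Function.curry ψ))ᴴ := by
  ext i i'
  simp [partialTraceRight, mul_apply, vecMulVec_apply]

theorem isDensity_partialTraceRight_vecMulVec [Fintype m] [Fintype n] {ψ : m × n → ℂ}
    (hψ : ∑ p, ‖ψ p‖ ^ 2 = 1) :
    IsDensity (partialTraceRight (vecMulVec ψ (star ψ))) := by
  refine ⟨?_, ?_⟩
  · rw [partialTraceRight_vecMulVec]
    exact posSemidef_self_mul_conjTranspose _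
  · rw [trace_partialTraceRight]
    exact (isDensity_vecMulVec hψ).2

theorem isDensity_partialTraceLeft_vecMulVec [Fintype m] [Fintype n] {ψ : m × n → ℂ}
    (hψ : ∑ p, ‖ψ p‖ ^ 2 = 1) :
    IsDensity (partialTraceLeft (vecMulVec ψ (star ψ))) :=
  isDensity_partialTraceRight_vecMulVec (ψ := ψ ∘ Prod.swap) <| by
    rw [← hψ]
    exact Fintype.sum_equiv (Equiv.prodComm n m) _ _ fun _ => rfl

variable [Fintype m] [Fintype n] [DecidableEq m] [DecidableEq n]

theorem Cl1_partialTraceRight_le (ρ : Matrix (m × n) (m × n) ℂ) :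
    Cl1 (partialTraceRight ρ) ≤ ∑ p, ∑ q, if p.1 ≠ q.1 ∧ p.2 = q.2 then ‖ρ p q‖ else 0 := by
  calc Cl1 (partialTraceRight ρ)
      ≤ ∑ i, ∑ i', if i = i' then 0 else ∑ j, ‖ρ (i, j) (i', j)‖ := by
        refine sum_le_sum fun i _ => sum_le_sum fun i' _ => ?_
        split_ifs
        exacts [le_rfl, norm_sum_le _ _]
    _ = _ := by
      simp only [Fintype.sum_prod_type, ite_and, ne_eq, ite_not]
      refine sum_congr rfl fun i _ => ?_
      rw [sum_comm]
      refine sum_congr rfl fun i' _ => ?_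
      split_ifs <;> simp

theorem Cl1_partialTraceLeft_le (ρ : Matrix (m × n) (m × n) ℂ) :
    Cl1 (partialTraceLeft ρ) ≤ ∑ p, ∑ q, if p.1 = q.1 ∧ p.2 ≠ q.2 then ‖ρ p q‖ else 0 := by
  rw [partialTraceLeft_eq_partialTraceRight_submatrix]
  refine (Cl1_partialTraceRight_le _).trans_eq ?_
  refine Fintype.sum_equiv (Equiv.prodComm n m) _ _ fun p => ?_
  exact Fintype.sum_equiv (Equiv.prodComm n m) _ _ fun q => by
    simp only [Equiv.prodComm_apply, Prod.fst_swap, Prod.snd_swap, submatrix_apply]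
    exact if_congr and_comm rfl rfl

theorem Cl1_partialTraceRight_add_Cl1_partialTraceLeft_le (ρ : Matrix (m × n) (m × n) ℂ) :
    Cl1 (partialTraceRight ρ) + Cl1 (partialTraceLeft ρ) ≤ Cl1 ρ := by
  refine (add_le_add (Cl1_partialTraceRight_le ρ) (Cl1_partialTraceLeft_le ρ)).trans ?_
  rw [← sum_add_distrib]
  refine sum_le_sum fun p _ => ?_
  rw [← sum_add_distrib]
  refine sum_le_sum fun q _ => ?_
  split_ifs <;> simp_all [Prod.ext_iff]

end PartialTrace

theorem cohRobustness_pure_bipartite_superadditive {d₁ d₂ : ℕ}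
    (ψ : Fin d₁ × Fin d₂ → ℂ) (hψ : ∑ p, ‖ψ p‖ ^ 2 = 1)
    (ρ : Matrix (Fin d₁ × Fin d₂) (Fin d₁ × Fin d₂) ℂ)
    (hρ : ρ = Matrix.vecMulVec ψ (star ψ))
    (ρ₁ : Matrix (Fin d₁) (Fin d₁) ℂ)
    (hρ₁ : ∀ i i', ρ₁ i i' = ∑ j : Fin d₂, ρ (i, j) (i', j))
    (ρ₂ : Matrix (Fin d₂) (Fin d₂) ℂ)
    (hρ₂ : ∀ j j', ρ₂ j j' = ∑ i : Fin d₁, ρ (i, j) (i, j')) :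
    cohRobustness ρ ≥ cohRobustness ρ₁ + cohRobustness ρ₂ := by
  obtain rfl : ρ₁ = partialTraceRight ρ := ext hρ₁
  obtain rfl : ρ₂ = partialTraceLeft ρ := ext hρ₂
  subst hρ
  calc cohRobustness (partialTraceRight _) + cohRobustness (partialTraceLeft _)
      ≤ Cl1 (partialTraceRight _) + Cl1 (partialTraceLeft _) :=
        add_le_add (cohRobustness_le_Cl1 (isDensity_partialTraceRight_vecMulVec hψ))
          (cohRobustness_le_Cl1 (isDensity_partialTraceLeft_vecMulVec hψ))
    _ ≤ Cl1 (vecMulVec ψ (star ψ)) := Cl1_partialTraceRight_add_Cl1_partialTraceLeft_le _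
    _ ≤ cohRobustness (vecMulVec ψ (star ψ)) := Cl1_vecMulVec_le_cohRobustness hψ
end
end
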